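/- arXiv:1408.5676 — 6 statements merged into one kernel-verified Lean document; each statement's English description precedes it below -/
import Mathlib

section
/- Let F : ℝⁿ ⇉ ℝⁿ be an upper semicontinuous set-valued map whose values F(x) are nonempty, closed and convex subsets of ℝⁿ. Then for every ε > 0 there exists a locally Lipschitz single-valued function f_ε : ℝⁿ → ℝⁿ such that the graph of f_ε is contained in graph(F) + εB, where B denotes the closed unit ball of ℝⁿ × ℝⁿ; i.e., for every x ∈ ℝⁿ there exist x' ∈ ℝⁿ and y' ∈ F(x') with ‖(x, f_ε(x)) − (x', y')‖ ≤ ε. -/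
/-!
Choose `δ x ≤ ε` so small that `F` maps `ball x (δ x)` into the `ε/2`-thickening of `F x`, pick
`y x ∈ F x`, and glue the constants `y i` with a smooth partition of unity subordinate to the
balls `ball i (δ i / 2)`. At a point `x`, among the finitely many active indices take `j` with the
largest radius: every active `i` then lies in `ball j (δ j)`, so every active `y i` lies in the
convex `ε/2`-thickening of `F j`, and hence so does the convex combination `f x`, while `x` itself
is within `δ j / 2 ≤ ε` of `j`.
-/

open Set

/-- A set-valued map `F : ℝⁿ ⇉ ℝⁿ` is upper semicontinuous: each value is nonempty and
closed, and for every open set `N` containing `F x₀` there is an open neighborhood `M`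
of `x₀` with `F x ⊆ N` for all `x ∈ M`. -/
def IsUSC {n : ℕ} (F : (Fin n → ℝ) → Set (Fin n → ℝ)) : Prop :=
  ∀ x₀ : Fin n → ℝ, (F x₀).Nonempty ∧ IsClosed (F x₀) ∧
    ∀ N : Set (Fin n → ℝ), IsOpen N → F x₀ ⊆ N →
      ∃ M : Set (Fin n → ℝ), IsOpen M ∧ x₀ ∈ M ∧ ∀ x ∈ M, F x ⊆ N

open Metric Filter Topology Manifold
open scoped ContDiff

section

variable {X Y : Type*} [PseudoMetricSpace X] [PseudoMetricSpace Y]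

lemma eventually_nhdsGT_forall_ball_subset_thickening {F : X → Set Y} {x₀ : X}
    (hF : ∀ N, IsOpen N → F x₀ ⊆ N → ∃ M, IsOpen M ∧ x₀ ∈ M ∧ ∀ x ∈ M, F x ⊆ N)
    {r : ℝ} (hr : 0 < r) :
    ∀ᶠ δ in 𝓝[>] 0, ∀ x ∈ ball x₀ δ, F x ⊆ thickening r (F x₀) := by
  obtain ⟨M, hMo, hx₀M, hM⟩ :=
    hF _ isOpen_thickening (self_subset_thickening hr (F x₀))
  obtain ⟨δ₀, hδ₀, hball⟩ := isOpen_iff.mp hMo x₀ hx₀M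
  filter_upwards [Ioo_mem_nhdsGT hδ₀] with δ hδ x hx
  exact hM x (hball (ball_subset_ball hδ.2.le hx))

lemma PartitionOfUnity.exists_forall_ne_zero_mem_ball {s : Set X} (ρ : PartitionOfUnity X X s)
    {δ : X → ℝ} (hρ : ρ.IsSubordinate fun i => ball i (δ i / 2)) {x : X} (hx : x ∈ s) :
    ∃ j, x ∈ ball j (δ j / 2) ∧ ∀ i, ρ i x ≠ 0 → i ∈ ball j (δ j) := by
  have hmem : ∀ i, ρ i x ≠ 0 → x ∈ ball i (δ i / 2) := fun i hi => hρ i (subset_tsupport _ hi)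
  obtain ⟨i₀, hi₀⟩ := ρ.exists_pos hx
  obtain ⟨j, hj, hjmax⟩ :=
    (ρ.finsupport x).exists_max_image δ ⟨i₀, (ρ.mem_finsupport x).2 hi₀.ne'⟩
  have hjx : x ∈ ball j (δ j / 2) := hmem j ((ρ.mem_finsupport x).1 hj)
  refine ⟨j, hjx, fun i hi => ?_⟩
  have hδij : δ i ≤ δ j := hjmax i ((ρ.mem_finsupport x).2 hi)
  calc dist i j ≤ dist x i + dist x j := dist_triangle_left i j x
    _ < δ i / 2 + δ j / 2 := add_lt_add (mem_ball.1 (hmem i hi)) (mem_ball.1 hjx)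
    _ ≤ δ j := by linarith

lemma PartitionOfUnity.exists_dist_finsum_smul_lt {E : Type*} [NormedAddCommGroup E] [NormedSpace ℝ E] {F : X → Set E} (hconv : ∀ x, Convex ℝ (F x))
    {δ : X → ℝ} {r : ℝ} (hδ : ∀ x, ∀ z ∈ ball x (δ x), F z ⊆ thickening r (F x))
    {s : Set X} (ρ : PartitionOfUnity X X s) (hρ : ρ.IsSubordinate fun i => ball i (δ i / 2))
    {y : X → E} (hy : ∀ i, y i ∈ F i) {x : X} (hx : x ∈ s) :
    ∃ x', dist x x' < δ x' / 2 ∧ ∃ y' ∈ F x', dist (∑ᶠ i, ρ i x • y i) y' < r := by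
  obtain ⟨j, hxj, hactive⟩ := ρ.exists_forall_ne_zero_mem_ball hρ hx
  have hsum : ∑ᶠ i, ρ i x • y i ∈ thickening r (F j) :=
    ((hconv j).thickening r).finsum_mem (ρ.nonneg · x) (ρ.sum_eq_one hx)
      fun i hi => hδ j i (hactive i hi) (hy i)
  exact ⟨j, hxj, mem_thickening_iff.1 hsum⟩

end

theorem exists_contDiff_forall_exists_dist_lt_of_upperSemicontinuous {E Y : Type*}
    [NormedAddCommGroup E] [NormedSpace ℝ E] [FiniteDimensional ℝ E]
    [NormedAddCommGroup Y] [NormedSpace ℝ Y] {F : E → Set Y} (hne : ∀ x, (F x).Nonempty)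
    (husc : ∀ x₀ N, IsOpen N → F x₀ ⊆ N → ∃ M, IsOpen M ∧ x₀ ∈ M ∧ ∀ x ∈ M, F x ⊆ N)
    (hconv : ∀ x, Convex ℝ (F x)) {ε : ℝ} (hε : 0 < ε) :
    ∃ f : E → Y, ContDiff ℝ ∞ f ∧
      ∀ x, ∃ x' y', y' ∈ F x' ∧ dist x x' < ε ∧ dist (f x) y' < ε := by
  choose y hy using hne
  choose δ hδ hδF using fun x => (Eventually.and (Ioc_mem_nhdsGT hε)
    (eventually_nhdsGT_forall_ball_subset_thickening (husc x) (half_pos hε))).exists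
  obtain ⟨ρ, hρ⟩ := SmoothPartitionOfUnity.exists_isSubordinate 𝓘(ℝ, E) isClosed_univ
    (fun i => ball i (δ i / 2)) (fun _ => isOpen_ball)
    fun x _ => mem_iUnion.2 ⟨x, mem_ball_self (half_pos (hδ x).1)⟩
  refine ⟨fun x => ∑ᶠ i, ρ i x • y i,
    contMDiff_iff_contDiff.1 (ρ.contMDiff_finsum_smul fun _ _ _ => contMDiffAt_const),
    fun x => ?_⟩
  obtain ⟨x', hxx', y', hy', hfy'⟩ := ρ.toPartitionOfUnity.exists_dist_finsum_smul_lt hconv hδF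
    hρ hy (mem_univ x)
  exact ⟨x', y', hy', by linarith [(hδ x').2], hfy'.trans (half_lt_self hε)⟩

/-- Cellina's approximate selection theorem. -/
theorem cellina_approximate_selection {n : ℕ} (F : (Fin n → ℝ) → Set (Fin n → ℝ))
    (hF : IsUSC F) (hconv : ∀ x, Convex ℝ (F x)) (ε : ℝ) (hε : 0 < ε) :
    ∃ fε : (Fin n → ℝ) → (Fin n → ℝ), LocallyLipschitz fε ∧
      ∀ x : Fin n → ℝ, ∃ x' y' : Fin n → ℝ, y' ∈ F x' ∧
        ‖((x, fε x) : (Fin n → ℝ) × (Fin n → ℝ)) - (x', y')‖ ≤ ε := by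
  obtain ⟨f, hf, hgraph⟩ := exists_contDiff_forall_exists_dist_lt_of_upperSemicontinuous
    (fun x => (hF x).1) (fun x => (hF x).2.2) hconv hε
  refine ⟨f, (hf.of_le (by exact_mod_cast le_top)).locallyLipschitz, fun x => ?_⟩
  obtain ⟨x', y', hy', hx, hy⟩ := hgraph x
  refine ⟨x', y', hy', ?_⟩
  rw [← dist_eq_norm, Prod.dist_eq]
  exact max_le hx.le hy.le
end

section
/- Let f : ℝⁿ → ℝⁿ, let M ⊆ ℝⁿ be a closed set with empty interior, and let x ∈ ℝⁿ ∖ M be a point at which f is continuous. Then the Filippov regularization of f relative to M at x consists of the single point f(x): ⋂_{ε>0} closure(convexHull(f(B(x, ε) ∖ M))) = {f(x)}. -/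
open Set

/-- At any continuity point of `f` outside the (closed, nowhere dense) discontinuity set
`M`, the Filippov regularization of `f` relative to `M` reduces to the single value
`f x`. -/
theorem filippov_regularization_at_continuity_point {n : ℕ}
    (f : (Fin n → ℝ) → (Fin n → ℝ)) (M : Set (Fin n → ℝ))
    (hM : IsClosed M) (hMint : interior M = ∅)
    (x : Fin n → ℝ) (hx : x ∉ M) (hf : ContinuousAt f x) :
    (⋂ ε > (0 : ℝ), closure (convexHull ℝ (f '' (Metric.ball x ε \ M)))) = {f x} := by
  apply Subset.antisymm
  · intro y hy
    simp only [mem_iInter] at hy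
    have key : ∀ δ > (0 : ℝ), dist y (f x) ≤ δ := by
      intro δ hδ
      obtain ⟨ε, hε, hball⟩ := Metric.continuousAt_iff.mp hf δ hδ
      have h1 : f '' (Metric.ball x ε \ M) ⊆ Metric.closedBall (f x) δ := by
        rintro _ ⟨z, ⟨hz, _⟩, rfl⟩
        exact Metric.ball_subset_closedBall (hball hz)
      have h2 : convexHull ℝ (f '' (Metric.ball x ε \ M)) ⊆ Metric.closedBall (f x) δ :=
        (convex_closedBall (f x) δ).convexHull_subset_iff.mpr h1
      have h3 : closure (convexHull ℝ (f '' (Metric.ball x ε \ M))) ⊆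
          Metric.closedBall (f x) δ :=
        closure_minimal h2 Metric.isClosed_closedBall
      exact h3 (hy ε hε)
    have h0 : dist y (f x) ≤ 0 := by
      by_contra h
      push_neg at h
      linarith [key (dist y (f x) / 2) (by linarith)]
    exact mem_singleton_iff.mpr (by rwa [← dist_le_zero])
  · intro y hy
    simp only [mem_singleton_iff] at hy
    subst hy
    simp only [mem_iInter]
    intro ε hε
    have hmem : f x ∈ f '' (Metric.ball x ε \ M) :=
      mem_image_of_mem f ⟨Metric.mem_ball_self hε, hx⟩
    exact subset_closure (subset_convexHull ℝ _ hmem)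
end

section
/- Let g : ℝⁿ → ℝⁿ be continuous, let A : ℝⁿ → ℝ^{n×n} be a continuous matrix-valued function, and define F : ℝⁿ ⇉ ℝⁿ by F(x) = { g(x) + A(x)·v : v ∈ Sign(x₁) × ⋯ × Sign(xₙ) }. Then for every ε > 0 there exists a locally Lipschitz function f_ε : ℝⁿ → ℝⁿ whose graph is contained in graph(F) + εB, where B is the closed unit ball of ℝⁿ × ℝⁿ. In other words, the piecewise-continuous right-hand side f(x) = g(x) + A(x)s(x), with s the componentwise signum, admits, after Filippov regularization, a locally Lipschitz continuous single-valued approximation to within any ε > 0. -/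
/-! Replace `sign xᵢ` by the ramp `clamp (xᵢ / δ(x))` into `[-1, 1]`. Zeroing the coordinates of `x`
with `|xᵢ| < δ(x)` moves `x` by at most `δ(x)` to a point `x'` at which every ramp value lies in
`Sign(x'ᵢ)`; if the continuous width `δ` is a modulus of continuity of `x ↦ g(x) + A(x)v`, uniformly
in `‖v‖ ≤ 1`, then `g(x) + A(x)v` is within `ε/2` of `g(x') + A(x')v ∈ F(x')`. This continuous
approximate selection is then smoothed by a partition of unity, and smooth maps are locally
Lipschitz. -/

open Set

/-- The set-valued signum map: `{-1}` for `x < 0`, `[-1, 1]` for `x = 0`, `{1}` for `x > 0`. -/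
noncomputable def SignSet (x : ℝ) : Set ℝ :=
  if x < 0 then {-1} else if x = 0 then Set.Icc (-1) 1 else {1}

/-- The Filippov regularization `F(x) = g(x) + A(x)·(Sign(x₁) × ⋯ × Sign(xₙ))` of the
piecewise continuous right-hand side `g(x) + A(x)s(x)`. -/
def FilippovRHS {n : ℕ} (g : (Fin n → ℝ) → (Fin n → ℝ))
    (A : (Fin n → ℝ) → Matrix (Fin n) (Fin n) ℝ) (x : Fin n → ℝ) : Set (Fin n → ℝ) :=
  {y | ∃ v : Fin n → ℝ, (∀ i, v i ∈ SignSet (x i)) ∧ y = g x + (A x).mulVec v}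

open Metric Topology
open scoped ContDiff Manifold

theorem Continuous.exists_pos_continuous_modulus {X Y : Type*} [MetricSpace X]
    [PseudoMetricSpace Y] {φ : X → Y} (hφ : Continuous φ) {η : ℝ} (hη : 0 < η) :
    ∃ δ : C(X, ℝ), (∀ x, 0 < δ x) ∧
      ∀ x x', dist x x' ≤ δ x → dist (φ x) (φ x') ≤ η := by
  let t : X → Set ℝ := fun x => {d | 0 < d ∧ ∀ x', dist x x' ≤ d → dist (φ x) (φ x') ≤ η}
  have ht : ∀ x, Convex ℝ (t x) := fun x => by
    refine convex_iff_ordConnected.2 ⟨fun d₁ hd₁ d₂ hd₂ d hd => ?_⟩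
    exact ⟨hd₁.1.trans_le hd.1, fun x' hx' => hd₂.2 x' (hx'.trans hd.2)⟩
  have hloc : ∀ x₀, ∃ c, ∀ᶠ x in 𝓝 x₀, c ∈ t x := fun x₀ => by
    obtain ⟨r, hr, hφr⟩ := continuous_iff.1 hφ x₀ (η / 2) (half_pos hη)
    refine ⟨r / 2, ?_⟩
    filter_upwards [ball_mem_nhds x₀ (half_pos hr)] with x hx
    refine ⟨half_pos hr, fun x' hx' => ?_⟩
    have hx'₀ : dist x' x₀ < r := by
      calc dist x' x₀ ≤ dist x' x + dist x x₀ := dist_triangle _ _ _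
        _ < r / 2 + r / 2 := by rw [dist_comm] at hx'; exact add_lt_add_of_le_of_lt hx' hx
        _ = r := add_halves r
    calc dist (φ x) (φ x') ≤ dist (φ x) (φ x₀) + dist (φ x') (φ x₀) := dist_triangle_right _ _ _
      _ ≤ η / 2 + η / 2 := add_le_add (hφr x (hx.trans (half_lt_self hr))).le (hφr x' hx'₀).le
      _ = η := add_halves η
  obtain ⟨δ, hδ⟩ := exists_continuous_forall_mem_convex_of_local_const ht hloc
  exact ⟨δ, fun x => (hδ x).1, fun x => (hδ x).2⟩

theorem Continuous.exists_contDiff_dist_le {E F : Type*} [NormedAddCommGroup E]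
    [NormedSpace ℝ E] [FiniteDimensional ℝ E] [NormedAddCommGroup F] [NormedSpace ℝ F]
    {h : E → F} (hh : Continuous h) {ε : ℝ} (hε : 0 < ε) :
    ∃ f : E → F, ContDiff ℝ ∞ f ∧ ∀ x, dist (f x) (h x) ≤ ε := by
  have hloc : ∀ x₀, ∃ c, ∀ᶠ x in 𝓝 x₀, c ∈ closedBall (h x) ε := fun x₀ =>
    ⟨h x₀, (hh.tendsto x₀).eventually (closedBall_mem_nhds (h x₀) hε) |>.mono
      fun x hx => mem_closedBall_comm.1 hx⟩
  obtain ⟨f, hf⟩ := exists_contMDiffMap_forall_mem_convex_of_local_const (n := (⊤ : ℕ∞))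
    𝓘(ℝ, E) (fun x => convex_closedBall (h x) ε) hloc
  exact ⟨f, contMDiff_iff_contDiff.1 f.contMDiff, hf⟩

theorem signSet_zero : SignSet 0 = Icc (-1) 1 := by simp [SignSet]

theorem signSet_of_neg {x : ℝ} (hx : x < 0) : SignSet x = {-1} := if_pos hx

theorem signSet_of_pos {x : ℝ} (hx : 0 < x) : SignSet x = {1} := by
  simp [SignSet, hx.not_gt, hx.ne']

noncomputable def signRamp (δ t : ℝ) : ℝ :=
  projIcc (-1) 1 (by norm_num) (t / δ)

theorem signRamp_mem_Icc (δ t : ℝ) : signRamp δ t ∈ Icc (-1) 1 :=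
  Subtype.prop _

theorem Continuous.signRamp {X : Type*} [TopologicalSpace X] {δ f : X → ℝ}
    (hδ : Continuous δ) (hf : Continuous f) (hδ0 : ∀ x, δ x ≠ 0) :
    Continuous fun x => _root_.signRamp (δ x) (f x) :=
  continuous_subtype_val.comp (continuous_projIcc.comp (hf.div hδ hδ0))

theorem exists_abs_sub_le_signRamp_mem_signSet {δ : ℝ} (hδ : 0 < δ) (t : ℝ) :
    ∃ s, |t - s| ≤ δ ∧ signRamp δ t ∈ SignSet s := by
  rcases lt_or_ge |t| δ with ht | ht
  · exact ⟨0, by simpa using ht.le, signSet_zero ▸ signRamp_mem_Icc δ t⟩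
  refine ⟨t, by simpa using hδ.le, ?_⟩
  rcases le_abs'.1 ht with ht | ht
  · have hdiv : t / δ ≤ -1 := by rw [div_le_iff₀ hδ]; linarith
    rw [signSet_of_neg (by linarith), signRamp, projIcc_of_le_left _ hdiv]
    rfl
  · have hdiv : 1 ≤ t / δ := by rw [le_div_iff₀ hδ]; linarith
    rw [signSet_of_pos (by linarith), signRamp, projIcc_of_right_le _ hdiv]
    rfl

theorem exists_dist_le_forall_signRamp_mem_signSet {ι : Type*} [Fintype ι] {δ : ℝ} (hδ : 0 < δ)
    (x : ι → ℝ) : ∃ x' : ι → ℝ, dist x x' ≤ δ ∧ ∀ i, signRamp δ (x i) ∈ SignSet (x' i) := by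
  choose x' hdist hmem using fun i => exists_abs_sub_le_signRamp_mem_signSet hδ (x i)
  exact ⟨x', (dist_pi_le_iff hδ.le).2 fun i => by rw [Real.dist_eq]; exact hdist i, hmem⟩

theorem exists_continuous_dist_le_filippovRHS {n : ℕ} {g : (Fin n → ℝ) → (Fin n → ℝ)}
    {A : (Fin n → ℝ) → Matrix (Fin n) (Fin n) ℝ} (hg : Continuous g) (hA : Continuous A)
    {η : ℝ} (hη : 0 < η) :
    ∃ h : (Fin n → ℝ) → (Fin n → ℝ), Continuous h ∧
      ∀ x, ∃ x', dist x x' ≤ η ∧ ∃ y' ∈ FilippovRHS g A x', dist (h x) y' ≤ η := by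
  let K := closedBall (0 : Fin n → ℝ) 1
  have : CompactSpace K := isCompact_iff_compactSpace.1 (isCompact_closedBall 0 1)
  let Φ : C((Fin n → ℝ) × K, Fin n → ℝ) :=
    ⟨fun p => g p.1 + (A p.1).mulVec p.2, by fun_prop⟩
  obtain ⟨δ, hδ0, hδ⟩ := Φ.curry.continuous.exists_pos_continuous_modulus hη
  let δ' x := min (δ x) η
  have hδ'0 x : 0 < δ' x := lt_min (hδ0 x) hη
  let v x i := signRamp (δ' x) (x i)
  have hv : Continuous v := continuous_pi fun i =>
    ((δ.continuous.min continuous_const).signRamp (continuous_apply i) fun x => (hδ'0 x).ne')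
  refine ⟨fun x => g x + (A x).mulVec (v x), hg.add (hA.matrix_mulVec hv), fun x => ?_⟩
  obtain ⟨x', hxx', hmem⟩ := exists_dist_le_forall_signRamp_mem_signSet (hδ'0 x) x
  have hvK : v x ∈ K := mem_closedBall_zero_iff.2 <|
    (pi_norm_le_iff_of_nonneg zero_le_one).2 fun i => abs_le.2 (signRamp_mem_Icc _ _)
  refine ⟨x', hxx'.trans (min_le_right _ _), _, ⟨v x, hmem, rfl⟩, ?_⟩
  calc dist (g x + (A x).mulVec (v x)) (g x' + (A x').mulVec (v x))
      = dist (Φ.curry x ⟨v x, hvK⟩) (Φ.curry x' ⟨v x, hvK⟩) := rfl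
    _ ≤ dist (Φ.curry x) (Φ.curry x') := ContinuousMap.dist_apply_le_dist _
    _ ≤ η := hδ x x' (hxx'.trans (min_le_left _ _))

/-- The piecewise continuous right-hand side `g(x) + A(x)s(x)` admits, after Filippov
regularization, a locally Lipschitz single-valued approximation whose graph lies within
`ε` of the graph of `F`, for every `ε > 0`. -/
theorem filippovRHS_approximate_selection {n : ℕ}
    (g : (Fin n → ℝ) → (Fin n → ℝ)) (A : (Fin n → ℝ) → Matrix (Fin n) (Fin n) ℝ)
    (hg : Continuous g) (hA : Continuous A) (ε : ℝ) (hε : 0 < ε) :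
    ∃ fε : (Fin n → ℝ) → (Fin n → ℝ), LocallyLipschitz fε ∧
      ∀ x : Fin n → ℝ, ∃ x' y' : Fin n → ℝ, y' ∈ FilippovRHS g A x' ∧
        ‖((x, fε x) : (Fin n → ℝ) × (Fin n → ℝ)) - (x', y')‖ ≤ ε := by
  obtain ⟨h, hh, hnear⟩ := exists_continuous_dist_le_filippovRHS hg hA (half_pos hε)
  obtain ⟨f, hf, hfh⟩ := hh.exists_contDiff_dist_le (half_pos hε)
  refine ⟨f, (hf.of_le (by simp)).locallyLipschitz, fun x => ?_⟩
  obtain ⟨x', hxx', y', hy', hhy'⟩ := hnear x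
  refine ⟨x', y', hy', ?_⟩
  rw [← dist_eq_norm, Prod.dist_eq, max_le_iff]
  constructor <;> linarith [dist_triangle (f x) (h x) y', hfh x]
end

section
/- Let 0 < q < 1 and x₀ > 0, and set T' = (Γ(1 + q)·x₀)^{1/q}. The function x(t) = x₀ − t^q / Γ(1 + q) satisfies: x(t) > 0 for all t ∈ [0, T'), x(T') = 0, x(0) = x₀, and for every t ∈ (0, T') the Caputo fractional derivative satisfies D_*^q x(t) = −1 = 2 − 3·sign(x(t)); hence x is a classical solution of the discontinuous fractional differential equation D_*^q x = 2 − 3·sign(x) with x(0) = x₀ on [0, T'). -/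
open Set intervalIntegral

/-- The Caputo fractional derivative of order `q ∈ (0,1)` with starting point `0`:
`D_*^q x (t) = (1/Γ(1-q)) ∫_0^t (t-τ)^(-q) x'(τ) dτ`. -/
noncomputable def caputoDeriv (q : ℝ) (x : ℝ → ℝ) (t : ℝ) : ℝ :=
  (1 / Real.Gamma (1 - q)) * ∫ τ in (0 : ℝ)..t, (t - τ) ^ (-q) * deriv x τ

/-!
Since `(t^q)' = q t^(q-1)`, the Caputo integral of `t ↦ t^q` is, after the substitution
`τ = t s`, the Beta integral `B(q, 1 - q) = Γ(q) Γ(1 - q)`, so `D_*^q t^q = Γ(1 + q)` and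
`D_*^q x = -1`. The threshold `T'` is exactly where `t^q / Γ(1 + q)` reaches `x₀`.
-/

theorem integral_rpow_mul_sub_rpow {a b t : ℝ} (ha : 0 < a) (hb : 0 < b) (ht : 0 < t) :
    ∫ τ in (0 : ℝ)..t, τ ^ (a - 1) * (t - τ) ^ (b - 1) =
      t ^ (a + b - 1) * ProbabilityTheory.beta a b := by
  have hscaled := Complex.betaIntegral_scaled a b ht
  rw [Complex.betaIntegral_eq_Gamma_mul_div _ _ (by simpa) (by simpa)] at hscaled
  apply Complex.ofReal_injective
  rw [← intervalIntegral.integral_ofReal]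
  refine ((integral_congr fun τ hτ => ?_).trans hscaled).trans ?_
  · rw [uIcc_of_le ht.le] at hτ
    push_cast
    rw [Complex.ofReal_cpow hτ.1, Complex.ofReal_cpow (sub_nonneg.2 hτ.2)]
    push_cast; rfl
  · rw [ProbabilityTheory.beta]
    push_cast [Complex.ofReal_cpow ht.le, ← Complex.Gamma_ofReal]
    rfl

theorem caputoDeriv_const_sub (q c : ℝ) (f : ℝ → ℝ) (t : ℝ) :
    caputoDeriv q (fun s => c - f s) t = -caputoDeriv q f t := by
  simp only [caputoDeriv, deriv_const_sub, mul_neg, intervalIntegral.integral_neg]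

theorem caputoDeriv_div_const (q d : ℝ) (f : ℝ → ℝ) (t : ℝ) :
    caputoDeriv q (fun s => f s / d) t = caputoDeriv q f t / d := by
  simp only [caputoDeriv, deriv_div_const, mul_div_assoc', intervalIntegral.integral_div]

theorem caputoDeriv_rpow {q p t : ℝ} (hq : q < 1) (hp : 0 < p) (ht : 0 < t) :
    caputoDeriv q (fun s => s ^ p) t =
      Real.Gamma (p + 1) / Real.Gamma (p + 1 - q) * t ^ (p - q) := by
  have hΓ : Real.Gamma (1 - q) ≠ 0 := (Real.Gamma_pos_of_pos (sub_pos.2 hq)).ne'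
  have hintegrand : ∀ τ, (t - τ) ^ (-q) * deriv (fun s => s ^ p) τ =
      p * (τ ^ (p - 1) * (t - τ) ^ ((1 - q) - 1)) := fun τ => by
    rw [Real.deriv_rpow_const, sub_sub_cancel_left]; ring
  simp only [caputoDeriv, hintegrand, intervalIntegral.integral_const_mul,
    integral_rpow_mul_sub_rpow hp (sub_pos.2 hq) ht, ProbabilityTheory.beta,
    Real.Gamma_add_one hp.ne']
  rw [show p + (1 - q) - 1 = p - q by ring, show p + (1 - q) = p + 1 - q by ring]
  field_simp

/-- For `x₀ > 0`, the function `x(t) = x₀ - t^q/Γ(1+q)` is a classical solution of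
`D_*^q x = 2 - 3·sign(x)`, `x(0) = x₀`, on `[0, T')` with `T' = (Γ(1+q)·x₀)^(1/q)`. -/
theorem classical_solution_pos (q x₀ T' : ℝ) (x : ℝ → ℝ)
    (hq0 : 0 < q) (hq1 : q < 1) (hx₀ : 0 < x₀)
    (hT' : T' = (Real.Gamma (1 + q) * x₀) ^ (1 / q))
    (hx : x = fun t => x₀ - t ^ q / Real.Gamma (1 + q)) :
    (∀ t ∈ Set.Ico (0 : ℝ) T', 0 < x t) ∧ x T' = 0 ∧ x 0 = x₀ ∧
      ∀ t ∈ Set.Ioo (0 : ℝ) T',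
        caputoDeriv q x t = -1 ∧ caputoDeriv q x t = 2 - 3 * Real.sign (x t) := by
  have hΓ : 0 < Real.Gamma (1 + q) := Real.Gamma_pos_of_pos (by linarith)
  have hT'q : T' ^ q = Real.Gamma (1 + q) * x₀ := by
    rw [hT', ← Real.rpow_mul (by positivity), one_div_mul_cancel hq0.ne', Real.rpow_one]
  have hpos : ∀ t ∈ Ico 0 T', 0 < x t := by
    rintro t ⟨ht0, htT⟩
    have := Real.rpow_lt_rpow ht0 htT hq0
    rw [hx, sub_pos, div_lt_iff₀ hΓ]
    linarith
  have hcaputo : ∀ t ∈ Ioo 0 T', caputoDeriv q x t = -1 := by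
    rintro t ⟨ht0, -⟩
    rw [hx, caputoDeriv_const_sub, caputoDeriv_div_const, caputoDeriv_rpow hq1 hq0 ht0, sub_self,
      Real.rpow_zero, add_sub_cancel_left, Real.Gamma_one, add_comm]
    field_simp
  refine ⟨hpos, ?_, by simp [hx, Real.zero_rpow hq0.ne'], fun t ht => ⟨hcaputo t ht, ?_⟩⟩
  · simp only [hx, hT'q]
    field_simp
    ring
  · rw [hcaputo t ht, Real.sign_of_pos (hpos t (Ioo_subset_Ico_self ht))]
    norm_num
end

section
/- Let 0 < q < 1. There is no T > 0 and no continuously differentiable function x : [0, T] → ℝ with x(0) = 0 such that the Caputo fractional derivative satisfies D_*^q x(t) = 2 − 3·sign(x(t)) for all t ∈ (0, T]. In particular, the discontinuous fractional initial value problem D_*^q x = 2 − 3·sign(x), x(0) = 0, has no classical solution. -/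
open Set intervalIntegral Filter Topology

/-! The right-hand side `2 - 3 sign x` takes only the values `-1, 2, 5`, so it stays at distance
at least `1` from `0`. The Caputo derivative of a function with bounded derivative, on the other
hand, is `O(t ^ (1 - q))` and hence tends to `0` as `t → 0⁺`; the two cannot agree near `0`. -/

lemma one_le_abs_two_sub_three_mul_sign (y : ℝ) : 1 ≤ |2 - 3 * Real.sign y| := by
  rcases lt_trichotomy y 0 with h | rfl | h
  · rw [Real.sign_of_neg h]; norm_num
  · rw [Real.sign_zero]; norm_num
  · rw [Real.sign_of_pos h]; norm_num

lemma integral_sub_rpow_neg {q : ℝ} (hq : q < 1) (t : ℝ) :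
    ∫ τ in (0 : ℝ)..t, (t - τ) ^ (-q) = t ^ (1 - q) / (1 - q) := by
  rw [integral_comp_sub_left (fun s : ℝ => s ^ (-q)), sub_self, sub_zero,
    integral_rpow (Or.inl (by linarith)), show -q + 1 = 1 - q by ring,
    Real.zero_rpow (by linarith), sub_zero]

lemma intervalIntegrable_sub_rpow_neg {q : ℝ} (hq : q < 1) (t : ℝ) :
    IntervalIntegrable (fun τ => (t - τ) ^ (-q)) MeasureTheory.volume 0 t := by
  have hrpow : IntervalIntegrable (fun s : ℝ => s ^ (-q)) MeasureTheory.volume 0 t :=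
    intervalIntegrable_rpow' (by linarith)
  simpa using (hrpow.comp_sub_left t).symm

lemma norm_integral_sub_rpow_mul_le {q t M : ℝ} {f : ℝ → ℝ} (hq : q < 1) (ht : 0 ≤ t)
    (hf : ∀ τ ∈ Icc 0 t, ‖f τ‖ ≤ M) :
    ‖∫ τ in (0 : ℝ)..t, (t - τ) ^ (-q) * f τ‖ ≤ M * (t ^ (1 - q) / (1 - q)) := by
  have hkernel := intervalIntegrable_sub_rpow_neg hq t
  calc ‖∫ τ in (0 : ℝ)..t, (t - τ) ^ (-q) * f τ‖
      ≤ ∫ τ in (0 : ℝ)..t, (t - τ) ^ (-q) * M := by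
        refine norm_integral_le_of_norm_le ht (MeasureTheory.ae_of_all _ fun τ hτ => ?_)
          (hkernel.mul_const M)
        have hpos : 0 ≤ (t - τ) ^ (-q) := Real.rpow_nonneg (by linarith [hτ.2]) _
        rw [Real.norm_eq_abs, abs_mul, abs_of_nonneg hpos]
        exact mul_le_mul_of_nonneg_left (by simpa using hf τ (Ioc_subset_Icc_self hτ)) hpos
    _ = M * (t ^ (1 - q) / (1 - q)) := by
        rw [integral_mul_const, integral_sub_rpow_neg hq t, mul_comm]

lemma tendsto_integral_sub_rpow_mul_nhdsGT_zero {q T M : ℝ} {f : ℝ → ℝ} (hq : q < 1)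
    (hT : 0 < T) (hf : ∀ τ ∈ Icc 0 T, ‖f τ‖ ≤ M) :
    Tendsto (fun t => ∫ τ in (0 : ℝ)..t, (t - τ) ^ (-q) * f τ) (𝓝[>] 0) (𝓝 0) := by
  have hpow : Tendsto (fun t : ℝ => M * (t ^ (1 - q) / (1 - q))) (𝓝[>] 0) (𝓝 0) := by
    have hcont : ContinuousAt (fun t : ℝ => M * (t ^ (1 - q) / (1 - q))) 0 :=
      continuousAt_const.mul
        ((Real.continuousAt_rpow_const 0 _ (Or.inr (by linarith))).div_const _)
    simpa [Real.zero_rpow (by linarith : 1 - q ≠ 0)] using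
      hcont.tendsto.mono_left nhdsWithin_le_nhds
  refine squeeze_zero_norm' ?_ hpow
  filter_upwards [Ioc_mem_nhdsGT hT] with t ht
  exact norm_integral_sub_rpow_mul_le hq ht.1.le fun τ hτ =>
    hf τ (Icc_subset_Icc le_rfl ht.2 hτ)

theorem no_classical_solution_from_zero_general (q : ℝ) (hq1 : q < 1) :
    ¬ ∃ (T : ℝ) (_ : 0 < T) (x x' : ℝ → ℝ),
        x 0 = 0 ∧
        (∀ t ∈ Set.Icc (0 : ℝ) T, HasDerivWithinAt x (x' t) (Set.Icc (0 : ℝ) T) t) ∧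
        ContinuousOn x' (Set.Icc (0 : ℝ) T) ∧
        ∀ t ∈ Set.Ioc (0 : ℝ) T,
          (1 / Real.Gamma (1 - q)) * ∫ τ in (0 : ℝ)..t, (t - τ) ^ (-q) * x' τ
            = 2 - 3 * Real.sign (x t) := by
  rintro ⟨T, hT, x, x', -, -, hcont, heq⟩
  obtain ⟨M, hM⟩ := isCompact_Icc.exists_bound_of_continuousOn hcont
  have hcaputo := (tendsto_integral_sub_rpow_mul_nhdsGT_zero hq1 hT hM).const_mul
    (1 / Real.Gamma (1 - q))
  rw [mul_zero] at hcaputo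
  obtain ⟨t, hsmall, ht⟩ :=
    ((hcaputo.eventually (Metric.ball_mem_nhds 0 one_pos)).and (Ioc_mem_nhdsGT hT)).exists
  rw [dist_zero_right, Real.norm_eq_abs, heq t ht] at hsmall
  linarith [one_le_abs_two_sub_three_mul_sign (x t)]

/-- The discontinuous fractional IVP `D_*^q x = 2 - 3·sign(x)`, `x(0) = 0`, has no
classical (continuously differentiable) solution on any interval `[0, T]`, `T > 0`.
Here `x'` denotes the (continuous) derivative of `x` on `[0, T]` and the Caputo
derivative is `(1/Γ(1-q)) ∫_0^t (t-τ)^(-q) x'(τ) dτ`. -/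
theorem no_classical_solution_from_zero (q : ℝ) (hq0 : 0 < q) (hq1 : q < 1) :
    ¬ ∃ (T : ℝ) (_ : 0 < T) (x x' : ℝ → ℝ),
        x 0 = 0 ∧
        (∀ t ∈ Set.Icc (0 : ℝ) T, HasDerivWithinAt x (x' t) (Set.Icc (0 : ℝ) T) t) ∧
        ContinuousOn x' (Set.Icc (0 : ℝ) T) ∧
        ∀ t ∈ Set.Ioc (0 : ℝ) T,
          (1 / Real.Gamma (1 - q)) * ∫ τ in (0 : ℝ)..t, (t - τ) ^ (-q) * x' τ
            = 2 - 3 * Real.sign (x t) :=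
  no_classical_solution_from_zero_general q hq1
end

section
/- Let 0 < q < 1, x₀ > 0, and T' = (Γ(1 + q)·x₀)^{1/q}. For every T > T' there is no continuously differentiable function x : [0, T] → ℝ with x(0) = x₀ such that D_*^q x(t) = 2 − 3·sign(x(t)) for all t ∈ (0, T]. That is, the classical solution of the discontinuous fractional initial value problem D_*^q x = 2 − 3·sign(x), x(0) = x₀ > 0, cannot be extended to any interval larger than [0, T'). -/
/-!
Write `I^a f (t) = Γ(a)⁻¹ ∫₀ᵗ (t - τ)^(a-1) f(τ) dτ` for the Riemann–Liouville integral, so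
that the Caputo derivative of `x` is `I^(1-q) x'`. For continuous `x'` this is continuous in
`t`, hence so is `sign (x t) = (2 - D_*^q x(t)) / 3` on `(0, T]`; being `{-1, 0, 1}`-valued on a
connected set and equal to `1` near `0` (where `x ≈ x₀ > 0`), it is identically `1`, so
`D_*^q x ≡ -1`. The semigroup law `I^q I^(1-q) = I^1` (Fubini on the triangle `τ ≤ t` plus the
Beta integral) and the fundamental theorem of calculus then give `x(T) = x₀ - T^q / Γ(q + 1)`,
which is negative as soon as `T > T'`, contradicting `sign (x T) = 1`.
-/

open Set intervalIntegral MeasureTheory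
open scoped BoundedContinuousFunction

theorem intervalIntegrable_sub_rpow {r : ℝ} (hr : -1 < r) (t : ℝ) :
    IntervalIntegrable (fun τ => (t - τ) ^ r) volume 0 t := by
  simpa using ((intervalIntegrable_rpow' (a := 0) (b := t) hr).comp_sub_left t).symm

theorem intervalIntegrable_sub_rpow_mul {r : ℝ} (hr : -1 < r) (t : ℝ) {f : ℝ → ℝ}
    (hf : Continuous f) : IntervalIntegrable (fun τ => (t - τ) ^ r * f τ) volume 0 t :=
  (intervalIntegrable_sub_rpow hr t).mul_continuousOn hf.continuousOn

theorem integral_sub_rpow {a t : ℝ} (ha : 0 < a) :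
    ∫ τ in (0 : ℝ)..t, (t - τ) ^ (a - 1) = t ^ a / a := by
  rw [integral_comp_sub_left (fun u => u ^ (a - 1)) t, sub_self, sub_zero,
    integral_rpow (Or.inl (by linarith)), sub_add_cancel, Real.zero_rpow ha.ne', sub_zero]

theorem integral_rpow_mul_one_sub_rpow {a b : ℝ} (ha : 0 < a) (hb : 0 < b) :
    ∫ v in (0 : ℝ)..1, v ^ (a - 1) * (1 - v) ^ (b - 1)
      = Real.Gamma a * Real.Gamma b / Real.Gamma (a + b) := by
  set I := ∫ v in (0 : ℝ)..1, v ^ (a - 1) * (1 - v) ^ (b - 1)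
  have hβ : Complex.betaIntegral a b = I := by
    rw [Complex.betaIntegral, ← intervalIntegral.integral_ofReal]
    refine integral_congr fun v hv => ?_
    rw [uIcc_of_le zero_le_one] at hv
    simp only [Complex.ofReal_mul, Complex.ofReal_cpow hv.1,
      Complex.ofReal_cpow (sub_nonneg.2 hv.2)]
    push_cast
    rfl
  have hΓ := Complex.Gamma_mul_Gamma_eq_betaIntegral (s := a) (t := b) (by simpa) (by simpa)
  have h : ((I * Real.Gamma (a + b) : ℝ) : ℂ) = ((Real.Gamma a * Real.Gamma b : ℝ) : ℂ) := by
    push_cast [← Complex.Gamma_ofReal]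
    rw [hΓ, hβ, mul_comm]
  rw [eq_div_iff (Real.Gamma_pos_of_pos (add_pos ha hb)).ne']
  exact_mod_cast h

theorem integral_sub_rpow_mul_rpow_sub {a b τ s : ℝ} (ha : 0 < a) (hb : 0 < b) (hτs : τ < s) :
    ∫ t in τ..s, (s - t) ^ (a - 1) * (t - τ) ^ (b - 1)
      = (s - τ) ^ (a + b - 1) * (Real.Gamma a * Real.Gamma b / Real.Gamma (a + b)) := by
  set c := s - τ
  have hc : 0 < c := sub_pos.2 hτs
  have hsub := smul_integral_comp_add_mul (a := 0) (b := 1)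
    (fun t => (s - t) ^ (a - 1) * (t - τ) ^ (b - 1)) c τ
  rw [mul_zero, add_zero, mul_one, add_sub_cancel] at hsub
  rw [← hsub, smul_eq_mul, ← intervalIntegral.integral_const_mul]
  have hscale : EqOn (fun v => c * ((s - (τ + c * v)) ^ (a - 1) * (τ + c * v - τ) ^ (b - 1)))
      (fun v => c ^ (a + b - 1) * (v ^ (b - 1) * (1 - v) ^ (a - 1))) (uIcc 0 1) := by
    intro v hv
    rw [uIcc_of_le zero_le_one] at hv
    have e1 : s - (τ + c * v) = c * (1 - v) := by ring
    have e2 : τ + c * v - τ = c * v := by ring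
    simp only
    rw [e1, e2, Real.mul_rpow hc.le (sub_nonneg.2 hv.2), Real.mul_rpow hc.le hv.1,
      show a + b - 1 = (a - 1) + (b - 1) + 1 by ring, Real.rpow_add_one hc.ne',
      Real.rpow_add hc]
    ring
  rw [integral_congr hscale, intervalIntegral.integral_const_mul,
    integral_rpow_mul_one_sub_rpow hb ha, add_comm b, mul_comm (Real.Gamma b)]

theorem integral_sub_rpow_mul_eq_rpow_mul (f : ℝ → ℝ) {a t : ℝ} (ha : a ≠ 0) (ht : 0 ≤ t) :
    ∫ τ in (0 : ℝ)..t, (t - τ) ^ (a - 1) * f τ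
      = t ^ a * ∫ u in (0 : ℝ)..1, (1 - u) ^ (a - 1) * f (t * u) := by
  have h := smul_integral_comp_mul_left (a := 0) (b := 1) (fun τ => (t - τ) ^ (a - 1) * f τ) t
  rw [mul_zero, mul_one] at h
  rw [← h, smul_eq_mul, ← intervalIntegral.integral_const_mul,
    ← intervalIntegral.integral_const_mul]
  refine integral_congr fun u hu => ?_
  rw [uIcc_of_le zero_le_one] at hu
  have hta : t ^ a = t * t ^ (a - 1) := by
    rw [mul_comm, ← Real.rpow_add_one' ht (by simpa), sub_add_cancel]
  rw [show t - t * u = t * (1 - u) by ring, Real.mul_rpow ht (sub_nonneg.2 hu.2), hta]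
  ring

theorem setIntegral_Ioc_indicator_Iic {g : ℝ → ℝ} {t s : ℝ} (ht : 0 ≤ t) (hts : t ≤ s) :
    ∫ τ in Ioc 0 s, (Iic t).indicator g τ = ∫ τ in (0 : ℝ)..t, g τ := by
  rw [MeasureTheory.integral_indicator measurableSet_Iic,
    Measure.restrict_restrict measurableSet_Iic, Iic_inter_Ioc_of_le hts,
    integral_of_le ht]

theorem setIntegral_Ioc_indicator_Ici {g : ℝ → ℝ} {τ s : ℝ} (hτ : 0 < τ) (hτs : τ ≤ s) :
    ∫ t in Ioc 0 s, (Ici τ).indicator g t = ∫ t in τ..s, g t := by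
  have hset : Ici τ ∩ Ioc 0 s = Icc τ s := by
    ext t
    simp only [mem_inter_iff, mem_Ici, mem_Ioc, mem_Icc]
    grind
  rw [MeasureTheory.integral_indicator measurableSet_Ici,
    Measure.restrict_restrict measurableSet_Ici, hset,
    integral_Icc_eq_integral_Ioc, integral_of_le hτs]

theorem integral_norm_sub_rpow_mul_le {b t : ℝ} (hb : 0 < b) (ht : 0 ≤ t) (f : ℝ →ᵇ ℝ) :
    ∫ τ in (0 : ℝ)..t, ‖(t - τ) ^ (b - 1) * f τ‖ ≤ ‖f‖ * t ^ b / b := by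
  have hr : -1 < b - 1 := by linarith
  calc ∫ τ in (0 : ℝ)..t, ‖(t - τ) ^ (b - 1) * f τ‖
      ≤ ∫ τ in (0 : ℝ)..t, (t - τ) ^ (b - 1) * ‖f‖ := by
        refine integral_mono_on ht (intervalIntegrable_sub_rpow_mul hr t f.continuous).norm
          ((intervalIntegrable_sub_rpow hr t).mul_const _) fun τ hτ => ?_
        have hpos : 0 ≤ (t - τ) ^ (b - 1) := Real.rpow_nonneg (sub_nonneg.2 hτ.2) _
        rw [norm_mul, Real.norm_of_nonneg hpos]
        exact mul_le_mul_of_nonneg_left (f.norm_coe_le_norm τ) hpos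
    _ = ‖f‖ * t ^ b / b := by
        rw [intervalIntegral.integral_mul_const, integral_sub_rpow hb]
        ring

noncomputable def triangleKernel (a b s : ℝ) (f : ℝ → ℝ) (t τ : ℝ) : ℝ :=
  (Iic t).indicator (fun τ => (s - t) ^ (a - 1) * ((t - τ) ^ (b - 1) * f τ)) τ

section triangleKernel

variable {a b s : ℝ}

theorem measurable_triangleKernel {f : ℝ → ℝ} (hf : Measurable f) :
    Measurable (Function.uncurry (triangleKernel a b s f)) := by
  have h : Function.uncurry (triangleKernel a b s f) = {p : ℝ × ℝ | p.2 ≤ p.1}.indicator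
      (fun p => (s - p.1) ^ (a - 1) * ((p.1 - p.2) ^ (b - 1) * f p.2)) := by
    ext ⟨t, τ⟩
    simp [triangleKernel, indicator_apply]
  rw [h]
  exact Measurable.indicator (by fun_prop) (measurableSet_le measurable_snd measurable_fst)

theorem setIntegral_triangleKernel_right {f : ℝ → ℝ} {t : ℝ} (ht : 0 ≤ t) (hts : t ≤ s) :
    ∫ τ in Ioc 0 s, triangleKernel a b s f t τ
      = (s - t) ^ (a - 1) * ∫ τ in (0 : ℝ)..t, (t - τ) ^ (b - 1) * f τ := by
  simp only [triangleKernel]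
  rw [setIntegral_Ioc_indicator_Iic ht hts, intervalIntegral.integral_const_mul]

theorem setIntegral_triangleKernel_left (ha : 0 < a) (hb : 0 < b) {f : ℝ → ℝ} {τ : ℝ}
    (hτ : 0 < τ) (hτs : τ < s) :
    ∫ t in Ioc 0 s, triangleKernel a b s f t τ
      = Real.Gamma a * Real.Gamma b / Real.Gamma (a + b) * ((s - τ) ^ (a + b - 1) * f τ) := by
  have h : (fun t => triangleKernel a b s f t τ)
      = (Ici τ).indicator (fun t => (s - t) ^ (a - 1) * (t - τ) ^ (b - 1) * f τ) := by
    ext t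
    simp [triangleKernel, indicator_apply, mul_assoc]
  rw [h, setIntegral_Ioc_indicator_Ici hτ hτs.le, intervalIntegral.integral_mul_const,
    integral_sub_rpow_mul_rpow_sub ha hb hτs]
  ring

theorem integrable_triangleKernel (ha : 0 < a) (hb : 0 < b) (f : ℝ →ᵇ ℝ) :
    Integrable (Function.uncurry (triangleKernel a b s f))
      ((volume.restrict (Ioc 0 s)).prod (volume.restrict (Ioc 0 s))) := by
  set μ := volume.restrict (Ioc (0 : ℝ) s)
  have hm : AEStronglyMeasurable (Function.uncurry (triangleKernel a b s f)) (μ.prod μ) :=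
    (measurable_triangleKernel f.continuous.measurable).aestronglyMeasurable
  refine (integrable_prod_iff hm).2 ⟨?_, ?_⟩
  · filter_upwards [ae_restrict_mem measurableSet_Ioc] with t ht
    rw [Function.uncurry_def]
    simp only [triangleKernel]
    rw [integrable_indicator_iff measurableSet_Iic, IntegrableOn,
      Measure.restrict_restrict measurableSet_Iic, Iic_inter_Ioc_of_le ht.2]
    exact ((intervalIntegrable_sub_rpow_mul (by linarith) t f.continuous).const_mul _).1
  · refine Integrable.mono' (g := fun t => (s - t) ^ (a - 1) * (‖f‖ * s ^ b / b))
      ((intervalIntegrable_sub_rpow (by linarith) s).mul_const _).1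
      hm.norm.integral_prod_right' ?_
    filter_upwards [ae_restrict_mem measurableSet_Ioc] with t ht
    have hst : 0 ≤ (s - t) ^ (a - 1) := Real.rpow_nonneg (sub_nonneg.2 ht.2) _
    have hnorm : (fun τ => ‖triangleKernel a b s f t τ‖)
        = (Iic t).indicator (fun τ => (s - t) ^ (a - 1) * ‖(t - τ) ^ (b - 1) * f τ‖) := by
      ext τ
      simp only [triangleKernel, norm_indicator_eq_indicator_norm, norm_mul,
        Real.norm_of_nonneg hst]
    rw [Real.norm_of_nonneg (integral_nonneg fun _ => norm_nonneg _)]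
    simp only [Function.uncurry_apply_pair]
    rw [hnorm,
      setIntegral_Ioc_indicator_Iic ht.1.le ht.2, intervalIntegral.integral_const_mul]
    gcongr
    calc _ ≤ ‖f‖ * t ^ b / b := integral_norm_sub_rpow_mul_le hb ht.1.le f
      _ ≤ ‖f‖ * s ^ b / b := by gcongr <;> linarith [ht.1, ht.2]

end triangleKernel

theorem integral_sub_rpow_mul_integral_sub_rpow_mul {a b s : ℝ} (ha : 0 < a) (hb : 0 < b)
    (f : ℝ →ᵇ ℝ) (hs : 0 ≤ s) :
    ∫ t in (0 : ℝ)..s, (s - t) ^ (a - 1) * ∫ τ in (0 : ℝ)..t, (t - τ) ^ (b - 1) * f τ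
      = Real.Gamma a * Real.Gamma b / Real.Gamma (a + b)
          * ∫ τ in (0 : ℝ)..s, (s - τ) ^ (a + b - 1) * f τ := by
  calc _ = ∫ t in Ioc 0 s, ∫ τ in Ioc 0 s, triangleKernel a b s f t τ := by
        rw [integral_of_le hs]
        exact setIntegral_congr_fun measurableSet_Ioc fun t ht =>
          (setIntegral_triangleKernel_right ht.1.le ht.2).symm
    _ = ∫ τ in Ioc 0 s, ∫ t in Ioc 0 s, triangleKernel a b s f t τ :=
        integral_integral_swap (integrable_triangleKernel ha hb f)
    _ = ∫ τ in Ioo 0 s, Real.Gamma a * Real.Gamma b / Real.Gamma (a + b)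
          * ((s - τ) ^ (a + b - 1) * f τ) := by
        rw [integral_Ioc_eq_integral_Ioo]
        exact setIntegral_congr_fun measurableSet_Ioo fun τ hτ =>
          setIntegral_triangleKernel_left ha hb hτ.1 hτ.2
    _ = _ := by
        rw [← integral_Ioc_eq_integral_Ioo, ← integral_of_le hs,
          intervalIntegral.integral_const_mul]

theorem exists_boundedContinuous_eqOn_Icc {E : Type*} [PseudoMetricSpace E] {f : ℝ → E}
    {a b : ℝ} (hab : a ≤ b) (hf : ContinuousOn f (Icc a b)) :
    ∃ g : ℝ →ᵇ E, EqOn g f (Icc a b) :=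
  ⟨(BoundedContinuousFunction.mkOfCompact ⟨(Icc a b).domRestrict f, hf.domRestrict⟩).compContinuous
    ⟨projIcc a b hab, continuous_projIcc⟩, fun t ht => by simp [projIcc_of_mem hab ht]⟩

noncomputable def riemannLiouvilleIntegral (a : ℝ) (f : ℝ → ℝ) (t : ℝ) : ℝ :=
  1 / Real.Gamma a * ∫ τ in (0 : ℝ)..t, (t - τ) ^ (a - 1) * f τ

section riemannLiouvilleIntegral

variable {a b t : ℝ}

theorem riemannLiouvilleIntegral_congr {f g : ℝ → ℝ} (ht : 0 ≤ t) (h : EqOn f g (Ioc 0 t)) :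
    riemannLiouvilleIntegral a f t = riemannLiouvilleIntegral a g t := by
  unfold riemannLiouvilleIntegral
  congr 1
  refine integral_congr_ae (ae_of_all _ fun τ hτ => ?_)
  rw [uIoc_of_le ht] at hτ
  rw [h hτ]

theorem riemannLiouvilleIntegral_const (ha : 0 < a) (c : ℝ) :
    riemannLiouvilleIntegral a (fun _ => c) t = c * t ^ a / Real.Gamma (a + 1) := by
  rw [riemannLiouvilleIntegral, intervalIntegral.integral_mul_const, integral_sub_rpow ha,
    Real.Gamma_add_one ha.ne']
  field_simp

theorem riemannLiouvilleIntegral_one (f : ℝ → ℝ) :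
    riemannLiouvilleIntegral 1 f t = ∫ τ in (0 : ℝ)..t, f τ := by
  simp [riemannLiouvilleIntegral]

theorem BoundedContinuousFunction.riemannLiouvilleIntegral_riemannLiouvilleIntegral (ha : 0 < a)
    (hb : 0 < b) (f : ℝ →ᵇ ℝ) {s : ℝ} (hs : 0 ≤ s) :
    riemannLiouvilleIntegral a (riemannLiouvilleIntegral b f) s
      = riemannLiouvilleIntegral (a + b) f s := by
  simp only [riemannLiouvilleIntegral, mul_left_comm _ (1 / Real.Gamma b),
    intervalIntegral.integral_const_mul, integral_sub_rpow_mul_integral_sub_rpow_mul ha hb f hs]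
  have := (Real.Gamma_pos_of_pos ha).ne'
  have := (Real.Gamma_pos_of_pos hb).ne'
  field_simp

theorem BoundedContinuousFunction.continuousOn_riemannLiouvilleIntegral (ha : 0 < a)
    (f : ℝ →ᵇ ℝ) :
    ContinuousOn (riemannLiouvilleIntegral a f) (Ici 0) := by
  have hΦ : Continuous fun t => ∫ u in (0 : ℝ)..1, (1 - u) ^ (a - 1) * f (t * u) := by
    refine continuous_of_dominated_interval (bound := fun u => (1 - u) ^ (a - 1) * ‖f‖)
      (fun t => ?_) (fun t => ae_of_all _ fun u hu => ?_)
      ((intervalIntegrable_sub_rpow (by linarith) 1).mul_const _)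
      (ae_of_all _ fun u _ => by fun_prop)
    · exact (by fun_prop : Measurable fun u => (1 - u) ^ (a - 1) * f (t * u)).aestronglyMeasurable
    · rw [uIoc_of_le zero_le_one] at hu
      have hpos : 0 ≤ (1 - u) ^ (a - 1) := Real.rpow_nonneg (sub_nonneg.2 hu.2) _
      rw [norm_mul, Real.norm_of_nonneg hpos]
      exact mul_le_mul_of_nonneg_left (f.norm_coe_le_norm _) hpos
  refine ContinuousOn.congr (f := fun t => 1 / Real.Gamma a
    * (t ^ a * ∫ u in (0 : ℝ)..1, (1 - u) ^ (a - 1) * f (t * u)))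
    (continuous_const.mul ((Real.continuous_rpow_const ha.le).mul hΦ)).continuousOn
    fun t ht => ?_
  rw [riemannLiouvilleIntegral, integral_sub_rpow_mul_eq_rpow_mul _ ha.ne' ht]

theorem continuousOn_riemannLiouvilleIntegral (ha : 0 < a) {f : ℝ → ℝ} {T : ℝ} (hT : 0 ≤ T)
    (hf : ContinuousOn f (Icc 0 T)) :
    ContinuousOn (riemannLiouvilleIntegral a f) (Icc 0 T) := by
  obtain ⟨g, hg⟩ := exists_boundedContinuous_eqOn_Icc hT hf
  refine ((g.continuousOn_riemannLiouvilleIntegral ha).mono Icc_subset_Ici_self).congr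
    fun t ht => riemannLiouvilleIntegral_congr ht.1 (hg.mono ?_).symm
  exact Ioc_subset_Icc_self.trans (Icc_subset_Icc_right ht.2)

theorem riemannLiouvilleIntegral_riemannLiouvilleIntegral (ha : 0 < a) (hb : 0 < b)
    {f : ℝ → ℝ} {s : ℝ} (hs : 0 ≤ s) (hf : ContinuousOn f (Icc 0 s)) :
    riemannLiouvilleIntegral a (riemannLiouvilleIntegral b f) s
      = riemannLiouvilleIntegral (a + b) f s := by
  obtain ⟨g, hg⟩ := exists_boundedContinuous_eqOn_Icc hs hf
  have hgf : ∀ t ∈ Icc 0 s, EqOn g f (Ioc 0 t) := fun t ht =>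
    hg.mono (Ioc_subset_Icc_self.trans (Icc_subset_Icc_right ht.2))
  rw [riemannLiouvilleIntegral_congr hs (fun t ht => riemannLiouvilleIntegral_congr ht.1.le
      (hgf t (Ioc_subset_Icc_self ht)).symm),
    g.riemannLiouvilleIntegral_riemannLiouvilleIntegral ha hb hs,
    riemannLiouvilleIntegral_congr hs (hgf s ⟨hs, le_rfl⟩)]

end riemannLiouvilleIntegral

theorem sub_eq_of_riemannLiouvilleIntegral_deriv_eq_const {q c T : ℝ} (hq0 : 0 < q) (hq1 : q < 1)
    (hT : 0 ≤ T) {x x' : ℝ → ℝ} (hx : ∀ t ∈ Icc 0 T, HasDerivWithinAt x (x' t) (Icc 0 T) t)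
    (hx'c : ContinuousOn x' (Icc 0 T))
    (hD : ∀ t ∈ Ioc 0 T, riemannLiouvilleIntegral (1 - q) x' t = c) :
    x T - x 0 = c * T ^ q / Real.Gamma (q + 1) := by
  have hftc : ∫ τ in (0 : ℝ)..T, x' τ = x T - x 0 :=
    integral_eq_sub_of_hasDeriv_right_of_le hT (fun t ht => (hx t ht).continuousWithinAt)
      (fun t ht => ((hx t (Ioo_subset_Icc_self ht)).hasDerivAt
        (Icc_mem_nhds ht.1 ht.2)).hasDerivWithinAt)
      (hx'c.intervalIntegrable_of_Icc hT)
  have hI := riemannLiouvilleIntegral_riemannLiouvilleIntegral hq0 (sub_pos.2 hq1) hT hx'c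
  rw [add_sub_cancel, riemannLiouvilleIntegral_one, riemannLiouvilleIntegral_congr hT hD,
    riemannLiouvilleIntegral_const hq0] at hI
  rw [← hftc, hI]

theorem pos_of_continuousOn_sign {x : ℝ → ℝ} {a b : ℝ} (hab : a < b) (hxa : 0 < x a)
    (hx : ContinuousWithinAt x (Ioc a b) a)
    (hsign : ContinuousOn (fun t => Real.sign (x t)) (Ioc a b)) :
    ∀ t ∈ Ioc a b, 0 < x t := by
  have : (nhdsWithin a (Ioc a b)).NeBot := mem_closure_iff_nhdsWithin_neBot.1
    (by rw [closure_Ioc hab.ne]; exact left_mem_Icc.2 hab.le)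
  obtain ⟨t₁, ht₁, hxt₁⟩ := (eventually_mem_nhdsWithin.and (hx.eventually (lt_mem_nhds hxa))).exists
  intro t ht
  have hsign_t : Real.sign (x t) = 1 := by
    rw [← Real.sign_of_pos hxt₁]
    refine isPreconnected_Ioc.constant_of_mapsTo (Set.toFinite {-1, 0, 1}).isDiscrete hsign
      (fun t _ => ?_) ht ht₁
    rcases Real.sign_apply_eq (x t) with h | h | h <;> simp [h]
  rcases lt_trichotomy (x t) 0 with h | h | h
  · norm_num [Real.sign_of_neg h] at hsign_t
  · norm_num [h] at hsign_t
  · exact h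

/-- For `x₀ > 0` and `T' = (Γ(1+q)·x₀)^(1/q)`, the classical solution of the
discontinuous fractional IVP `D_*^q x = 2 - 3·sign(x)`, `x(0) = x₀`, cannot be extended
to any interval `[0, T]` with `T > T'`. Here `x'` denotes the (continuous) derivative of
`x` on `[0, T]` and the Caputo derivative is `(1/Γ(1-q)) ∫_0^t (t-τ)^(-q) x'(τ) dτ`. -/
theorem no_extension_beyond_T' (q x₀ T' : ℝ) (hq0 : 0 < q) (hq1 : q < 1) (hx₀ : 0 < x₀)
    (hT' : T' = (Real.Gamma (1 + q) * x₀) ^ (1 / q)) :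
    ∀ T : ℝ, T' < T →
      ¬ ∃ x x' : ℝ → ℝ,
          x 0 = x₀ ∧
          (∀ t ∈ Set.Icc (0 : ℝ) T, HasDerivWithinAt x (x' t) (Set.Icc (0 : ℝ) T) t) ∧
          ContinuousOn x' (Set.Icc (0 : ℝ) T) ∧
          ∀ t ∈ Set.Ioc (0 : ℝ) T,
            (1 / Real.Gamma (1 - q)) * ∫ τ in (0 : ℝ)..t, (t - τ) ^ (-q) * x' τ
              = 2 - 3 * Real.sign (x t) := by
  rintro T hT ⟨x, x', hx0, hx', hx'c, hcaputo⟩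
  have hΓx₀ : 0 < Real.Gamma (1 + q) * x₀ := mul_pos (Real.Gamma_pos_of_pos (by linarith)) hx₀
  have hT'0 : 0 < T' := hT' ▸ Real.rpow_pos_of_pos hΓx₀ _
  have hT0 : 0 < T := hT'0.trans hT
  have hD : ∀ t ∈ Ioc 0 T, riemannLiouvilleIntegral (1 - q) x' t = 2 - 3 * Real.sign (x t) :=
    fun t ht => by rw [← hcaputo t ht, riemannLiouvilleIntegral, sub_sub_cancel_left]
  have hpos : ∀ t ∈ Ioc 0 T, 0 < x t := by
    refine pos_of_continuousOn_sign hT0 (hx0 ▸ hx₀)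
      ((hx' 0 ⟨le_rfl, hT0.le⟩).continuousWithinAt.mono Ioc_subset_Icc_self) ?_
    refine ContinuousOn.congr (f := fun t => (2 - riemannLiouvilleIntegral (1 - q) x' t) / 3)
      ((continuousOn_const.sub ((continuousOn_riemannLiouvilleIntegral (sub_pos.2 hq1)
        hT0.le hx'c).mono Ioc_subset_Icc_self)).div_const 3) fun t ht => ?_
    simp only [hD t ht]
    ring
  have hxT := sub_eq_of_riemannLiouvilleIntegral_deriv_eq_const (c := -1) hq0 hq1 hT0.le hx' hx'c
    fun t ht => by rw [hD t ht, Real.sign_of_pos (hpos t ht)]; norm_num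
  have hT'q : T' ^ q = Real.Gamma (q + 1) * x₀ := by
    rw [hT', ← Real.rpow_mul hΓx₀.le, one_div_mul_cancel hq0.ne', Real.rpow_one, add_comm]
  have hTq : Real.Gamma (q + 1) * x₀ < T ^ q := hT'q ▸ Real.rpow_lt_rpow hT'0.le hT hq0
  have hxT_neg : x T < 0 := by
    rw [hx0, eq_div_iff (Real.Gamma_pos_of_pos (by linarith)).ne'] at hxT
    nlinarith [Real.Gamma_pos_of_pos (show 0 < q + 1 by linarith)]
  exact (hpos T ⟨hT0, le_rfl⟩).not_gt hxT_neg
end
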